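/- Let g_r(v, n) = (r^{[k]}/ψ(v)^{r+k}) · (v^{n−1}/Γ(n)) · ∏_{i=1}^k π_{n_i}(v), where r^{[k]} = Γ(r+k)/Γ(r), n = n₁+⋯+n_k. Define ω₀ = ((r+k)/n) ∫₀^∞ v (π₁(v)/ψ(v)) g_r(v, n) dv and ω_i = ∫₀^∞ v (π_{n_i+1}(v)/π_{n_i}(v)) g_r(v, n) dv for 1 ≤ i ≤ k. Then ω₀ + (1/n) Σ_{i=1}^k ω_i = ∫₀^∞ g_r(v, n) dv. -/

import Mathlib

open MeasureTheory Real Set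

/-- Proposition 3.1(i): with
g_r(v,n) = (r^{[k]}/ψ(v)^{r+k})·(v^{n−1}/Γ(n))·∏ π_{n_i}(v),
ω₀ = ((r+k)/n)∫ v (π₁(v)/ψ(v)) g_r(v,n) dv and
ω_i = ∫ v (π_{n_i+1}(v)/π_{n_i}(v)) g_r(v,n) dv,
one has ω₀ + (1/n) Σ_i ω_i = ∫ g_r(v,n) dv. -/
theorem stmt6 (ρ : ℝ → ℝ) (r : ℝ) (hr : 0 < r) (k : ℕ) (hk : 1 ≤ k)
    (nv : Fin k → ℕ) (hnv : ∀ i, 1 ≤ nv i) (n : ℕ) (hn : n = ∑ i, nv i)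
    (ψ : ℝ → ℝ) (pin : ℕ → ℝ → ℝ)
    (hψ : ∀ v, ψ v = 1 + ∫ x in Ioi (0:ℝ), (1 - Real.exp (-v * x)) * ρ x)
    (hpi : ∀ m v, pin m v = ∫ x in Ioi (0:ℝ), x ^ m * ρ x * Real.exp (-v * x))
    (hψ' : ∀ v ∈ Ioi (0:ℝ), HasDerivAt ψ (pin 1 v) v)
    (hpi' : ∀ (m : ℕ), 1 ≤ m → ∀ v ∈ Ioi (0:ℝ), HasDerivAt (pin m) (-(pin (m + 1) v)) v)
    (hψpos : ∀ v ∈ Ioi (0:ℝ), 0 < ψ v)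
    (hpipos : ∀ (m : ℕ), 1 ≤ m → ∀ v ∈ Ioi (0:ℝ), 0 < pin m v)
    (g : ℝ → ℝ)
    (hg : ∀ v, g v = (Real.Gamma (r + k) / Real.Gamma r) / (ψ v) ^ (r + (k:ℝ))
        * (v ^ (n - 1) / Real.Gamma n) * ∏ i, pin (nv i) v)
    (hgint : IntegrableOn g (Ioi 0))
    (hint0 : IntegrableOn (fun v => v * (pin 1 v / ψ v) * g v) (Ioi 0))
    (hinti : ∀ i, IntegrableOn (fun v => v * (pin (nv i + 1) v / pin (nv i) v) * g v) (Ioi 0))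
    (hbd0 : Filter.Tendsto (fun v => v ^ n * (∏ i, pin (nv i) v) / (ψ v) ^ (r + (k:ℝ)))
      (nhdsWithin 0 (Ioi 0)) (nhds 0))
    (hbdtop : Filter.Tendsto (fun v => v ^ n * (∏ i, pin (nv i) v) / (ψ v) ^ (r + (k:ℝ)))
      Filter.atTop (nhds 0)) :
    ((r + k) / n) * (∫ v in Ioi (0:ℝ), v * (pin 1 v / ψ v) * g v)
      + (1 / n) * ∑ i, ∫ v in Ioi (0:ℝ), v * (pin (nv i + 1) v / pin (nv i) v) * g v
      = ∫ v in Ioi (0:ℝ), g v := by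
  -- basic positivity facts
  have hkn : k ≤ n := by
    rw [hn]
    calc k = ∑ _i : Fin k, 1 := by simp
    _ ≤ ∑ i, nv i := Finset.sum_le_sum fun i _ => hnv i
  have hn1 : 1 ≤ n := le_trans hk hkn
  have hnR : (0:ℝ) < n := by exact_mod_cast hn1
  have hΓr : (0:ℝ) < Real.Gamma r := Real.Gamma_pos_of_pos hr
  have hΓrk : (0:ℝ) < Real.Gamma (r + k) := Real.Gamma_pos_of_pos (by positivity)
  have hΓn : (0:ℝ) < Real.Gamma n := Real.Gamma_pos_of_pos hnR
  set c : ℝ := r + (k:ℝ) with hc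
  set F : ℝ → ℝ := fun v => v ^ n * (∏ i, pin (nv i) v) / (ψ v) ^ c with hF
  set E : ℝ → ℝ := fun v =>
    (Real.Gamma r * Real.Gamma n / Real.Gamma (r + k)) *
      ((n:ℝ) * g v - (r + k) * (v * (pin 1 v / ψ v) * g v)
        - ∑ i, v * (pin (nv i + 1) v / pin (nv i) v) * g v) with hE
  -- derivative of F is E on Ioi 0
  have key : ∀ v ∈ Ioi (0:ℝ), HasDerivAt F (E v) v := by
    intro v hv
    have hvpos : 0 < v := hv
    have hψv : 0 < ψ v := hψpos v hv
    have hpiv : ∀ i : Fin k, 0 < pin (nv i) v := fun i => hpipos (nv i) (hnv i) v hv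
    have hP : HasDerivAt (fun w => ∏ i, pin (nv i) w)
        (∑ i, (∏ j ∈ Finset.univ.erase i, pin (nv j) v) • (-(pin (nv i + 1) v))) v :=
      HasDerivAt.fun_finsetProd (fun i _ => hpi' (nv i) (hnv i) v hv)
    have hN : HasDerivAt (fun w => w ^ n * ∏ i, pin (nv i) w)
        ((n:ℝ) * v ^ (n - 1) * (∏ i, pin (nv i) v)
          + v ^ n * (∑ i, (∏ j ∈ Finset.univ.erase i, pin (nv j) v) • (-(pin (nv i + 1) v)))) v :=
      (hasDerivAt_pow n v).mul hP
    have hD : HasDerivAt (fun w => (ψ w) ^ c) (pin 1 v * c * (ψ v) ^ (c - 1)) v :=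
      (hψ' v hv).rpow_const (Or.inl hψv.ne')
    have hDne : (ψ v) ^ c ≠ 0 := (Real.rpow_pos_of_pos hψv c).ne'
    have hdiv := hN.div hD hDne
    convert hdiv using 1
    · rfl
    · rfl
    · rfl
    -- now the algebraic identity
    have hvn : v ^ n = v ^ (n - 1) * v := by
      rw [← pow_succ, Nat.sub_add_cancel hn1]
    have hacm : (ψ v) ^ (c - 1) = (ψ v) ^ c / ψ v := Real.rpow_sub_one hψv.ne' c
    have hmulP : ∀ i : Fin k,
        pin (nv i) v * ∏ j ∈ Finset.univ.erase i, pin (nv j) v = ∏ j, pin (nv j) v :=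
      fun i => Finset.mul_prod_erase Finset.univ (fun j => pin (nv j) v) (Finset.mem_univ i)
    have hsum : ∀ i : Fin k, v * (pin (nv i + 1) v / pin (nv i) v) * g v
        = (Real.Gamma (r + k) / Real.Gamma r) / (ψ v) ^ c * (v ^ (n-1) * v / Real.Gamma n)
            * ((∏ j ∈ Finset.univ.erase i, pin (nv j) v) * pin (nv i + 1) v) := by
      intro i
      rw [hg v]
      rw [← hmulP i]
      field_simp [(hpiv i).ne']
      ring
    simp only [hE, smul_eq_mul]
    rw [Finset.sum_congr rfl (fun i _ => hsum i)]
    rw [← Finset.mul_sum]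
    rw [hg v]
    have hS : ∑ i, (∏ j ∈ Finset.univ.erase i, pin (nv j) v) * -pin (nv i + 1) v
        = -∑ i, (∏ j ∈ Finset.univ.erase i, pin (nv j) v) * pin (nv i + 1) v := by
      rw [← Finset.sum_neg_distrib]
      exact Finset.sum_congr rfl fun i _ => by ring
    rw [hS, hacm, hvn]
    have hc0 : c = r + (k:ℝ) := hc
    field_simp
    ring
  -- integrability of E on Ioi 0
  have hEint : IntegrableOn E (Ioi 0) := by
    apply Integrable.const_mul
    apply Integrable.sub
    · exact Integrable.sub (hgint.const_mul _) (hint0.const_mul _)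
    · exact integrable_finset_sum _ fun i _ => hinti i
  -- F tends to F 1 at 1 and continuity
  have hFcont1 : ContinuousAt F 1 := (key 1 (by norm_num)).continuousAt
  -- integral over Ioc 0 1
  have h1 : ∫ v in Ioc (0:ℝ) 1, E v = F 1 - 0 := by
    rw [← intervalIntegral.integral_of_le (zero_le_one)]
    exact intervalIntegral.integral_eq_sub_of_hasDerivAt_of_tendsto zero_lt_one
      (fun x hx => key x hx.1)
      ((intervalIntegrable_iff_integrableOn_Ioc_of_le zero_le_one).2 (hEint.mono_set Ioc_subset_Ioi_self))
      hbd0 (hFcont1.continuousWithinAt)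
  -- integral over Ioi 1
  have h2 : ∫ v in Ioi (1:ℝ), E v = 0 - F 1 :=
    integral_Ioi_of_hasDerivAt_of_tendsto hFcont1.continuousWithinAt
      (fun x hx => key x (lt_trans one_pos hx : (0:ℝ) < x))
      (hEint.mono_set fun x (hx : x ∈ Ioi 1) => (lt_trans one_pos hx : (0:ℝ) < x)) hbdtop
  -- total integral of E is zero
  have hEzero : ∫ v in Ioi (0:ℝ), E v = 0 := by
    rw [← Ioc_union_Ioi_eq_Ioi (zero_le_one' ℝ),
      setIntegral_union (Ioc_disjoint_Ioi le_rfl) measurableSet_Ioi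
        (hEint.mono_set Ioc_subset_Ioi_self)
        (hEint.mono_set fun x hx => (lt_trans one_pos hx : (0:ℝ) < x)), h1, h2]
    ring
  -- expand the integral of E
  have hexp : ∫ v in Ioi (0:ℝ), E v
      = (Real.Gamma r * Real.Gamma n / Real.Gamma (r + k)) *
        ((n:ℝ) * (∫ v in Ioi (0:ℝ), g v)
          - (r + k) * (∫ v in Ioi (0:ℝ), v * (pin 1 v / ψ v) * g v)
          - ∑ i, ∫ v in Ioi (0:ℝ), v * (pin (nv i + 1) v / pin (nv i) v) * g v) := by
    simp only [hE]
    rw [integral_const_mul]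
    congr 1
    have i1 : Integrable (fun v => (n:ℝ) * g v) (volume.restrict (Ioi 0)) := hgint.const_mul _
    have i2 : Integrable (fun v => (r + (k:ℝ)) * (v * (pin 1 v / ψ v) * g v))
        (volume.restrict (Ioi 0)) := hint0.const_mul _
    have i3 : Integrable (fun v => ∑ i, v * (pin (nv i + 1) v / pin (nv i) v) * g v)
        (volume.restrict (Ioi 0)) := integrable_finset_sum _ fun i _ => hinti i
    have i12 : Integrable (fun v => (n:ℝ) * g v - (r + (k:ℝ)) * (v * (pin 1 v / ψ v) * g v))
        (volume.restrict (Ioi 0)) := i1.sub i2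
    rw [integral_sub i12 i3, integral_sub i1 i2, integral_const_mul, integral_const_mul,
      integral_finset_sum _ fun i _ => hinti i]
  have hmain : (n:ℝ) * (∫ v in Ioi (0:ℝ), g v)
      = (r + k) * (∫ v in Ioi (0:ℝ), v * (pin 1 v / ψ v) * g v)
        + ∑ i, ∫ v in Ioi (0:ℝ), v * (pin (nv i + 1) v / pin (nv i) v) * g v := by
    have := hexp.symm.trans hEzero
    have hC : (0:ℝ) < Real.Gamma r * Real.Gamma n / Real.Gamma (r + k) := by positivity
    have := (mul_eq_zero.1 this).resolve_left hC.ne'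
    linarith
  have hnne : (n:ℝ) ≠ 0 := hnR.ne'
  rw [div_mul_eq_mul_div, one_div, inv_mul_eq_div, ← add_div, hc, ← hmain]
  exact mul_div_cancel_left₀ _ hnne
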